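/- Fix r ≥ 1, positive integers l_1,…,l_r, d_1,…,d_r and integers m_1,…,m_r. Let σ be a permutation of {1,…,r}, set J(σ,k) = {σ(i) : i ≥ σ^{-1}(k)}, and suppose p ∈ ℤ^r satisfies p_k ≥ -m_k - l_k + l_{J(σ,k)}·d_k for all k, where l_J = ∑_{j∈J} l_j. Then for every nonempty subset J ⊆ {1,…,r} there exists k ∈ J with p_k + m_k + l_k - l_J·d_k ≥ 0. -/

import Mathlib

open Finset

/-- The index set `J(σ,k) = {σ(i) : i ≥ σ⁻¹(k)}`. -/
def Jset {r : ℕ} (σ : Equiv.Perm (Fin r)) (k : Fin r) : Finset (Fin r) :=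
  (Finset.univ.filter (fun i => σ.symm k ≤ i)).image σ

theorem mem_Jset_iff {r : ℕ} (σ : Equiv.Perm (Fin r)) (k j : Fin r) :
    j ∈ Jset σ k ↔ σ.symm k ≤ σ.symm j := by
  simp only [Jset, mem_image, mem_filter, mem_univ, true_and]
  constructor
  · rintro ⟨i, hki, rfl⟩
    simpa using hki
  · exact fun hkj => ⟨σ.symm j, hkj, σ.apply_symm_apply j⟩

/-- The element of `J` that `σ` lists first. -/
theorem exists_mem_subset_Jset {r : ℕ} (σ : Equiv.Perm (Fin r)) {J : Finset (Fin r)}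
    (hJ : J.Nonempty) : ∃ k ∈ J, J ⊆ Jset σ k := by
  obtain ⟨k, hkJ, hmin⟩ := J.exists_min_image σ.symm hJ
  exact ⟨k, hkJ, fun j hj => (mem_Jset_iff σ k j).2 (hmin j hj)⟩

theorem stmt_3_general (r : ℕ) (l d m : Fin r → ℤ)
    (hl : ∀ k, 1 ≤ l k) (hd : ∀ k, 1 ≤ d k)
    (σ : Equiv.Perm (Fin r)) (p : Fin r → ℤ)
    (hp : ∀ k, -m k - l k + (∑ j ∈ Jset σ k, l j) * d k ≤ p k) :
    ∀ J : Finset (Fin r), J.Nonempty →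
      ∃ k ∈ J, 0 ≤ p k + m k + l k - (∑ j ∈ J, l j) * d k := by
  intro J hJ
  obtain ⟨k, hkJ, hsub⟩ := exists_mem_subset_Jset σ hJ
  refine ⟨k, hkJ, ?_⟩
  have hsum : ∑ j ∈ J, l j ≤ ∑ j ∈ Jset σ k, l j :=
    sum_le_sum_of_subset_of_nonneg hsub fun j _ _ => zero_le_one.trans (hl j)
  have hmul := mul_le_mul_of_nonneg_right hsum (zero_le_one.trans (hd k))
  linarith [hp k]

/-- The converse inclusion in Proposition 1.3: each translate `p_σ + ℕ^r` is
contained in the regularity set. -/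
theorem stmt_3 (r : ℕ) (hr : 1 ≤ r) (l d m : Fin r → ℤ)
    (hl : ∀ k, 1 ≤ l k) (hd : ∀ k, 1 ≤ d k)
    (σ : Equiv.Perm (Fin r)) (p : Fin r → ℤ)
    (hp : ∀ k, -m k - l k + (∑ j ∈ Jset σ k, l j) * d k ≤ p k) :
    ∀ J : Finset (Fin r), J.Nonempty →
      ∃ k ∈ J, 0 ≤ p k + m k + l k - (∑ j ∈ J, l j) * d k :=
  stmt_3_general r l d m hl hd σ p hp
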